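/- Consider the directed formation in ℝ² with four agents at p_1 = (−1,1), p_2 = (1,1), p_3 = (1,−1), p_4 = (−1,−1) and directed edge set E = {(1,4), (2,1), (2,3), (2,4), (3,4)}. Then the vector x = (x_1, x_2, x_3, x_4) with x_1 = (0,2), x_2 = (−1,1), x_3 = (−2,0), x_4 = (0,0) satisfies L_B x = 0 but R_B x ≠ 0; hence Null(R_B) ⊊ Null(L_B) and this formation is not bearing persistent. -/

import Mathlib

open scoped InnerProductSpace

/-- The orthogonal projection matrix `P_x = I − x xᵀ/‖x‖²` onto the orthogonal
complement of a nonzero vector `x ∈ ℝᵈ`, as a linear map. -/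
noncomputable def projP {d : ℕ} (x : EuclideanSpace ℝ (Fin d)) :
    EuclideanSpace ℝ (Fin d) →ₗ[ℝ] EuclideanSpace ℝ (Fin d) :=
  LinearMap.id - (‖x‖ ^ 2)⁻¹ • ((innerSL ℝ x).toLinearMap.smulRight x)

/-- The linear map sending a configuration `x = (x_1, …, x_n)` to `x_j − x_i`. -/
noncomputable def relpos {d n : ℕ} (i j : Fin n) :
    (Fin n → EuclideanSpace ℝ (Fin d)) →ₗ[ℝ] EuclideanSpace ℝ (Fin d) :=
  LinearMap.proj (R := ℝ) (φ := fun _ : Fin n => EuclideanSpace ℝ (Fin d)) j -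
    LinearMap.proj (R := ℝ) (φ := fun _ : Fin n => EuclideanSpace ℝ (Fin d)) i

/-- The bearing `g_ij = (p_j − p_i)/‖p_j − p_i‖` of edge `(i, j)`. -/
noncomputable def bearing {d n : ℕ} (p : Fin n → EuclideanSpace ℝ (Fin d))
    (i j : Fin n) : EuclideanSpace ℝ (Fin d) :=
  ‖p j - p i‖⁻¹ • (p j - p i)

/-- The bearing rigidity matrix `R_B` of the formation `G(p)`: the linear map
`ℝ^{dn} → ℝ^{d|E|}` whose component for edge `(i,j) ∈ E` is
`(1/‖e_ij‖) P_{g_ij} (x_j − x_i)`. -/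
noncomputable def RB {d n : ℕ} (E : Finset (Fin n × Fin n))
    (p : Fin n → EuclideanSpace ℝ (Fin d)) :
    (Fin n → EuclideanSpace ℝ (Fin d)) →ₗ[ℝ] (↥E → EuclideanSpace ℝ (Fin d)) :=
  LinearMap.pi fun e =>
    ‖p e.1.2 - p e.1.1‖⁻¹ • (projP (bearing p e.1.1 e.1.2) ∘ₗ relpos e.1.1 e.1.2)

/-- The bearing Laplacian `L_B` of the formation `G(p)`: the linear map
`ℝ^{dn} → ℝ^{dn}` whose `i`-th `ℝᵈ`-block is `∑_{j : (i,j) ∈ E} P_{g_ij}(x_i − x_j)`. -/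
noncomputable def LB {d n : ℕ} (E : Finset (Fin n × Fin n))
    (p : Fin n → EuclideanSpace ℝ (Fin d)) :
    (Fin n → EuclideanSpace ℝ (Fin d)) →ₗ[ℝ] (Fin n → EuclideanSpace ℝ (Fin d)) :=
  LinearMap.pi fun i =>
    ∑ j ∈ Finset.univ.filter (fun j => (i, j) ∈ E),
      (projP (bearing p i j) ∘ₗ relpos j i)

/-- The subspace `span{𝟏 ⊗ I_d, p} = {c • p + (v, …, v) : c ∈ ℝ, v ∈ ℝᵈ}` of
translations and scalings of the configuration `p`. -/
def transScale {d n : ℕ} (p : Fin n → EuclideanSpace ℝ (Fin d)) :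
    Set (Fin n → EuclideanSpace ℝ (Fin d)) :=
  {x | ∃ (c : ℝ) (v : EuclideanSpace ℝ (Fin d)), x = c • p + fun _ => v}

/-- The four agents of the unit-square formation:
`p_1 = (−1,1)`, `p_2 = (1,1)`, `p_3 = (1,−1)`, `p_4 = (−1,−1)`. -/
noncomputable def pSquare : Fin 4 → EuclideanSpace ℝ (Fin 2) := fun i =>
  (WithLp.equiv 2 (Fin 2 → ℝ)).symm (![![-1, 1], ![1, 1], ![1, -1], ![-1, -1]] i)

/-- The directed edge set `{(1,4), (2,1), (2,3), (2,4), (3,4)}` (with agents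
indexed `1,…,4` as `0,…,3`). -/
def Enp : Finset (Fin 4 × Fin 4) := {(0, 3), (1, 0), (1, 2), (1, 3), (2, 3)}

/-- The vector `x` with `x_1 = (0,2)`, `x_2 = (−1,1)`, `x_3 = (−2,0)`, `x_4 = (0,0)`. -/
noncomputable def xWitness : Fin 4 → EuclideanSpace ℝ (Fin 2) := fun i =>
  (WithLp.equiv 2 (Fin 2 → ℝ)).symm (![![0, 2], ![-1, 1], ![-2, 0], ![0, 0]] i)

/-!
If the edge term `P_{g_ij}(x_j − x_i)` of `R_B x` vanishes then so does the term
`P_{g_ij}(x_i − x_j)` of `L_B x`, hence `Null(R_B) ⊆ Null(L_B)` for every formation.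
For the square the inclusion is strict because the terms of `L_B x` cancel at agent 2
without vanishing: its edges to agents 1, 3, 4 contribute `(0,−1)`, `(1,0)` and `(−1,1)`,
while every other edge contributes `0`.
-/

section Bearing

variable {d n : ℕ}

lemma projP_apply (x v : EuclideanSpace ℝ (Fin d)) :
    projP x v = v - ((‖x‖ ^ 2)⁻¹ * ⟪x, v⟫_ℝ) • x := by
  simp [projP, smul_smul]

lemma projP_smul {c : ℝ} (hc : c ≠ 0) (x : EuclideanSpace ℝ (Fin d)) :
    projP (c • x) = projP x := by
  ext1 v
  simp only [projP_apply, norm_smul, real_inner_smul_left, smul_smul, mul_pow,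
    Real.norm_eq_abs, sq_abs]
  rcases eq_or_ne x 0 with rfl | hx
  · simp
  · have : ‖x‖ ≠ 0 := norm_ne_zero_iff.mpr hx
    congr 2
    field_simp

lemma projP_bearing (p : Fin n → EuclideanSpace ℝ (Fin d)) {i j : Fin n} (h : p j ≠ p i) :
    projP (bearing p i j) = projP (p j - p i) :=
  projP_smul (inv_ne_zero (norm_ne_zero_iff.mpr (sub_ne_zero.mpr h))) _

lemma LB_apply (E : Finset (Fin n × Fin n)) (p x : Fin n → EuclideanSpace ℝ (Fin d))
    (i : Fin n) :
    LB E p x i = ∑ j ∈ Finset.univ.filter (fun j => (i, j) ∈ E),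
      projP (bearing p i j) (x i - x j) := by
  simp [LB, relpos]

lemma LB_apply_of_ne {E : Finset (Fin n × Fin n)} {p : Fin n → EuclideanSpace ℝ (Fin d)}
    (hp : ∀ e ∈ E, p e.2 ≠ p e.1) (x : Fin n → EuclideanSpace ℝ (Fin d)) (i : Fin n) :
    LB E p x i = ∑ j ∈ Finset.univ.filter (fun j => (i, j) ∈ E),
      projP (p j - p i) (x i - x j) := by
  rw [LB_apply]
  refine Finset.sum_congr rfl fun j hj => ?_
  rw [projP_bearing p (hp (i, j) (Finset.mem_filter.mp hj).2)]

lemma RB_apply (E : Finset (Fin n × Fin n)) (p x : Fin n → EuclideanSpace ℝ (Fin d))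
    (e : E) :
    RB E p x e = ‖p e.1.2 - p e.1.1‖⁻¹ • projP (bearing p e.1.1 e.1.2) (x e.1.2 - x e.1.1) :=
  rfl

lemma RB_eq_zero_iff {E : Finset (Fin n × Fin n)} {p : Fin n → EuclideanSpace ℝ (Fin d)}
    (hp : ∀ e ∈ E, p e.2 ≠ p e.1) (x : Fin n → EuclideanSpace ℝ (Fin d)) :
    RB E p x = 0 ↔ ∀ e ∈ E, projP (p e.2 - p e.1) (x e.2 - x e.1) = 0 := by
  refine ⟨fun h e he => ?_, fun h => funext fun e => ?_⟩
  · have := congrFun h ⟨e, he⟩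
    rwa [RB_apply, Pi.zero_apply, projP_bearing p (hp e he), smul_eq_zero_iff_right
      (inv_ne_zero (norm_ne_zero_iff.mpr (sub_ne_zero.mpr (hp e he))))] at this
  · rw [RB_apply, projP_bearing p (hp e e.2), h e e.2, smul_zero, Pi.zero_apply]

lemma ker_RB_le_ker_LB {E : Finset (Fin n × Fin n)} {p : Fin n → EuclideanSpace ℝ (Fin d)}
    (hp : ∀ e ∈ E, p e.2 ≠ p e.1) : LinearMap.ker (RB E p) ≤ LinearMap.ker (LB E p) := by
  intro x hx
  rw [LinearMap.mem_ker, RB_eq_zero_iff hp] at hx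
  refine LinearMap.mem_ker.mpr (funext fun i => ?_)
  rw [LB_apply_of_ne hp]
  refine Finset.sum_eq_zero fun j hj => ?_
  rw [← neg_sub (x j), map_neg, hx (i, j) (Finset.mem_filter.mp hj).2, neg_zero]

lemma ker_RB_lt_ker_LB {E : Finset (Fin n × Fin n)} {p : Fin n → EuclideanSpace ℝ (Fin d)}
    (hp : ∀ e ∈ E, p e.2 ≠ p e.1) {x : Fin n → EuclideanSpace ℝ (Fin d)}
    (hLB : LB E p x = 0) (hRB : RB E p x ≠ 0) :
    LinearMap.ker (RB E p) < LinearMap.ker (LB E p) :=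
  SetLike.lt_iff_le_and_exists.mpr ⟨ker_RB_le_ker_LB hp, x, hLB, hRB⟩

end Bearing

lemma projP_apply_fin_two (x v : EuclideanSpace ℝ (Fin 2)) (k : Fin 2) :
    projP x v k = v k - (x 0 * v 0 + x 1 * v 1) / (x 0 ^ 2 + x 1 ^ 2) * x k := by
  simp [projP_apply, EuclideanSpace.real_norm_sq_eq, PiLp.inner_apply, Fin.sum_univ_two,
    mul_comm, div_eq_inv_mul]

lemma pSquare_ne_of_mem_Enp : ∀ e ∈ Enp, pSquare e.2 ≠ pSquare e.1 := by
  intro e he h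
  have h0 := congrFun (congrArg WithLp.ofLp h) 0
  have h1 := congrFun (congrArg WithLp.ofLp h) 1
  simp only [Enp, Finset.mem_insert, Finset.mem_singleton] at he
  rcases he with rfl | rfl | rfl | rfl | rfl <;> simp [pSquare] at h0 h1 <;> linarith

lemma LB_pSquare_xWitness_eq_zero : LB Enp pSquare xWitness = 0 := by
  funext i
  rw [LB_apply_of_ne pSquare_ne_of_mem_Enp, Finset.sum_filter]
  ext k
  fin_cases i <;> fin_cases k <;>
    simp [Fin.sum_univ_four, Enp, projP_apply_fin_two, pSquare, xWitness] <;> norm_num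

lemma RB_pSquare_xWitness_ne_zero : RB Enp pSquare xWitness ≠ 0 := by
  rw [Ne, RB_eq_zero_iff pSquare_ne_of_mem_Enp]
  intro h
  have := congrArg (fun v => v 1) (h (1, 0) (by decide))
  norm_num [projP_apply_fin_two, pSquare, xWitness] at this

/-- The square formation with directed edges `{(1,4),(2,1),(2,3),(2,4),(3,4)}` is
not bearing persistent: `x` satisfies `L_B x = 0` but `R_B x ≠ 0`, hence
`Null(R_B) ⊊ Null(L_B)`. -/
theorem stmt15 :
    LB Enp pSquare xWitness = 0 ∧ RB Enp pSquare xWitness ≠ 0 ∧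
      LinearMap.ker (RB Enp pSquare) < LinearMap.ker (LB Enp pSquare) :=
  ⟨LB_pSquare_xWitness_eq_zero, RB_pSquare_xWitness_ne_zero,
    ker_RB_lt_ker_LB pSquare_ne_of_mem_Enp LB_pSquare_xWitness_eq_zero
      RB_pSquare_xWitness_ne_zero⟩
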